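/- For every n ≥ 2 there exist a finite set X with |X| = n+2, a class 𝒢 of n manipulation graphs on X each of maximum out-degree at most 2, and a hypothesis class H of functions X → Bool with |H| = n that admits a standard online learner with mistake bound 1, such that for every deterministic learner that must choose its hypothesis without observing the current point and observes only post-manipulation feedback — i.e., a map L : List (X × Bool) → (X → Bool), where at round t it implements h_t = L((v_1,y_1),…,(v_{t-1},y_{t-1})) and the revealed point v_t is determined by the post-manipulation feedback protocol under the true graph — there exist a true graph N* ∈ 𝒢, a finite (𝒢,H)-realizable sequence, and protocol-consistent choices of the revealed points v_t on which the learner makes at least n−1 mistakes. -/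

import Mathlib

/-- The labeling induced by hypothesis `h` under manipulation graph `N`. -/
def inducedLabel {X : Type*} (N : X → Finset X) (h : X → Bool) : X → Bool :=
  fun x => h x || decide (∃ z ∈ N x, h z = true)

/-- The history (list of labeled examples) seen strictly before round `t`. -/
def histFn {X : Type*} {T : ℕ} (seq : Fin T → X × Bool) (t : Fin T) : List (X × Bool) :=
  List.ofFn fun i : Fin t.1 => seq (Fin.castLE t.isLt.le i)

/-- A standard online learner `A` has mistake bound `M` for the class `H`. -/
def StdMistakeBound {X : Type*} (A : List (X × Bool) → X → Bool)
    (H : Set (X → Bool)) (M : ℕ) : Prop :=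
  ∀ T : ℕ, ∀ seq : Fin T → X × Bool,
    (∃ h ∈ H, ∀ t : Fin T, h (seq t).1 = (seq t).2) →
    {t : Fin T | A (histFn seq t) (seq t).1 ≠ (seq t).2}.ncard ≤ M

/-- The hypothesis implemented at round `t` by a learner `L` that only observes
post-manipulation feedback `(v_i, y_i)` and does not see the current point. -/
def pmfHyp {X : Type*} {T : ℕ} (L : List (X × Bool) → (X → Bool))
    (v : Fin T → X) (y : Fin T → Bool) (t : Fin T) : X → Bool :=
  L (histFn (fun i => (v i, y i)) t)

/-- Membership in the closed neighborhood `N[x] = {x} ∪ N(x)`. -/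
def InClosedNbhd {X : Type*} (N : X → Finset X) (x z : X) : Prop :=
  z = x ∨ z ∈ N x

/-- Protocol consistency of the revealed points `v` under the true graph `N`. -/
def PMFConsistent {X : Type*} {T : ℕ} (N : X → Finset X)
    (h : Fin T → X → Bool) (x v : Fin T → X) : Prop :=
  ∀ t : Fin T,
    ((∃ z, InClosedNbhd N (x t) z ∧ h t z = true) →
      InClosedNbhd N (x t) (v t) ∧ h t (v t) = true) ∧
    ((¬ ∃ z, InClosedNbhd N (x t) z ∧ h t z = true) → v t = x t)

/-! ### Auxiliary construction -/

namespace PMFAux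

variable (n : ℕ)

/-- The point `w_j`. -/
def wpt (j : Fin n) : Fin (n + 2) := ⟨j.1 + 2, by omega⟩

lemma wpt_ne_zero (j : Fin n) : wpt n j ≠ 0 := by
  intro h
  have := congrArg Fin.val h
  simp [wpt] at this

lemma wpt_ne_one (j : Fin n) : wpt n j ≠ 1 := by
  intro h
  have := congrArg Fin.val h
  simp [wpt] at this

lemma wpt_injective : Function.Injective (wpt n) := by
  intro a b h
  simpa [wpt, Fin.ext_iff] using h

/-- Hypothesis `h_i` : indicator of `w_i`. -/
def hpt (i : Fin n) : Fin (n + 2) → Bool := fun x => decide (x = wpt n i)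

/-- Graph `N_i` : `N(0) = {w_i}`, `N(1) = {0}`, empty elsewhere. -/
def Ngr (i : Fin n) : Fin (n + 2) → Finset (Fin (n + 2)) :=
  fun x => if x = 0 then {wpt n i} else if x = 1 then {0} else ∅

lemma hpt_injective : Function.Injective (hpt n) := by
  intro a b h
  have h2 : decide (wpt n a = wpt n a) = decide (wpt n a = wpt n b) := congrFun h (wpt n a)
  rw [decide_eq_decide] at h2
  exact wpt_injective n (h2.mp rfl)

lemma Ngr_injective : Function.Injective (Ngr n) := by
  intro a b h
  have := congrFun h 0
  simp only [Ngr, if_pos rfl] at this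
  exact wpt_injective n (Finset.singleton_injective this)

/-- Set of `j` such that `h` is positive at `w_j`. -/
def posW (h : Fin (n + 2) → Bool) : Finset (Fin n) :=
  Finset.univ.filter fun j => h (wpt n j) = true

/-- One adversary step: given the learner's hypothesis, return
`(query, label, revealed point, eliminated index)`. -/
def stepOut (h : Fin (n + 2) → Bool) :
    Fin (n + 2) × Bool × Fin (n + 2) × Option (Fin n) :=
  if h 0 = true then (1, false, 0, none)
  else if h 1 = true then (1, false, 1, none)
  else if hp : (posW n h).Nonempty then
    ((wpt n ((posW n h).min' hp)), false, (wpt n ((posW n h).min' hp)),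
      some ((posW n h).min' hp))
  else (0, true, 0, none)

lemma stepOut_cases (h : Fin (n + 2) → Bool) :
    (stepOut n h = (1, false, 0, none) ∧ h 0 = true) ∨
    (stepOut n h = (1, false, 1, none) ∧ h 0 = false ∧ h 1 = true) ∨
    (∃ j, stepOut n h = (wpt n j, false, wpt n j, some j) ∧
      h 0 = false ∧ h 1 = false ∧ h (wpt n j) = true) ∨
    (stepOut n h = (0, true, 0, none) ∧ h 0 = false ∧ h 1 = false ∧
      ∀ j, h (wpt n j) = false) := by
  unfold stepOut
  by_cases h0 : h 0 = true
  · left; simp [h0]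
  · rw [if_neg h0]
    by_cases h1 : h 1 = true
    · right; left
      simp [h1, Bool.not_eq_true] at *
      simp [h1, h0]
    · rw [if_neg h1]
      by_cases hp : (posW n h).Nonempty
      · right; right; left
        refine ⟨(posW n h).min' hp, ?_, ?_, ?_, ?_⟩
        · rw [dif_pos hp]
        · exact Bool.not_eq_true _ |>.mp h0
        · exact Bool.not_eq_true _ |>.mp h1
        · have := (posW n h).min'_mem hp
          simpa [posW] using this
      · right; right; right
        rw [dif_neg hp]
        refine ⟨rfl, Bool.not_eq_true _ |>.mp h0, Bool.not_eq_true _ |>.mp h1, fun j => ?_⟩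
        cases hjv : h (wpt n j) with
        | false => rfl
        | true => exact absurd ⟨j, by simp [posW, hjv]⟩ hp

variable (L : List (Fin (n + 2) × Bool) → (Fin (n + 2) → Bool))

/-- The feedback history after `t` simulated rounds. -/
def state : ℕ → List (Fin (n + 2) × Bool)
  | 0 => []
  | t + 1 => state t ++ [((stepOut n (L (state t))).2.2.1, (stepOut n (L (state t))).2.1)]

/-- Learner's hypothesis at round `t`. -/
def hseq (t : ℕ) : Fin (n + 2) → Bool := L (state n L t)

/-- Query point at round `t`. -/
def qN (t : ℕ) : Fin (n + 2) := (stepOut n (hseq n L t)).1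
/-- Label at round `t`. -/
def yN (t : ℕ) : Bool := (stepOut n (hseq n L t)).2.1
/-- Revealed point at round `t`. -/
def vN (t : ℕ) : Fin (n + 2) := (stepOut n (hseq n L t)).2.2.1
/-- Eliminated index at round `t`. -/
def eN (t : ℕ) : Option (Fin n) := (stepOut n (hseq n L t)).2.2.2

lemma state_eq_ofFn (m : ℕ) :
    state n L m = List.ofFn (fun i : Fin m => (vN n L i.1, yN n L i.1)) := by
  induction m with
  | zero => simp [state]
  | succ t ih =>
    rw [List.ofFn_succ', List.concat_eq_append]
    show state n L t ++ _ = _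
    rw [ih]
    simp [vN, yN, hseq, Fin.val_last, ih]

lemma one_ne_zero' : (1 : Fin (n + 2)) ≠ 0 := by
  intro h
  have := congrArg Fin.val h
  simp at this

lemma Ngr_zero (i : Fin n) : Ngr n i 0 = {wpt n i} := if_pos rfl

lemma Ngr_one (i : Fin n) : Ngr n i 1 = {0} := by
  rw [Ngr, if_neg (one_ne_zero' n), if_pos rfl]

lemma Ngr_w (i j : Fin n) : Ngr n i (wpt n j) = ∅ := by
  rw [Ngr, if_neg (wpt_ne_zero n j), if_neg (wpt_ne_one n j)]

lemma hpt_zero (i : Fin n) : hpt n i 0 = false := by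
  simp [hpt, (wpt_ne_zero n i).symm]

lemma hpt_one (i : Fin n) : hpt n i 1 = false := by
  simp [hpt, (wpt_ne_one n i).symm]

lemma hpt_w (i j : Fin n) : hpt n i (wpt n j) = decide (j = i) := by
  have : wpt n j = wpt n i ↔ j = i := ⟨fun h => wpt_injective n h, fun h => h ▸ rfl⟩
  simp [hpt, this]

variable (L : List (Fin (n + 2) × Bool) → (Fin (n + 2) → Bool))

/-- The key per-round facts: realizability of the label, protocol consistency of the
revealed point, and the fact that the learner errs. -/
lemma main_round (i : Fin n) (t : ℕ) (ht : eN n L t ≠ some i) :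
    inducedLabel (Ngr n i) (hpt n i) (qN n L t) = yN n L t ∧
    ((∃ z, InClosedNbhd (Ngr n i) (qN n L t) z ∧ hseq n L t z = true) →
      InClosedNbhd (Ngr n i) (qN n L t) (vN n L t) ∧ hseq n L t (vN n L t) = true) ∧
    ((¬ ∃ z, InClosedNbhd (Ngr n i) (qN n L t) z ∧ hseq n L t z = true) →
      vN n L t = qN n L t) ∧
    hseq n L t (vN n L t) ≠ yN n L t := by
  rcases stepOut_cases n (hseq n L t) with ⟨hc, h0⟩ | ⟨hc, h0, h1⟩ |
    ⟨j, hc, h0, h1, hj⟩ | ⟨hc, h0, h1, hw⟩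
  · -- learner positive at 0 : query 1, label false, reveal 0
    have hq : qN n L t = 1 := by simp [qN, hc]
    have hy : yN n L t = false := by simp [yN, hc]
    have hv : vN n L t = 0 := by simp [vN, hc]
    rw [hq, hy, hv]
    have hmem : InClosedNbhd (Ngr n i) 1 0 := Or.inr (by rw [Ngr_one]; exact Finset.mem_singleton_self 0)
    refine ⟨?_, fun _ => ⟨hmem, h0⟩, fun hne => absurd ⟨0, hmem, h0⟩ hne, by simp [h0]⟩
    simp [inducedLabel, Ngr_one, hpt_zero, hpt_one]
  · -- learner positive at 1 : query 1, label false, reveal 1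
    have hq : qN n L t = 1 := by simp [qN, hc]
    have hy : yN n L t = false := by simp [yN, hc]
    have hv : vN n L t = 1 := by simp [vN, hc]
    rw [hq, hy, hv]
    have hmem : InClosedNbhd (Ngr n i) 1 1 := Or.inl rfl
    refine ⟨?_, fun _ => ⟨hmem, h1⟩, fun hne => absurd ⟨1, hmem, h1⟩ hne, by simp [h1]⟩
    simp [inducedLabel, Ngr_one, hpt_zero, hpt_one]
  · -- learner positive at some w_j : query w_j, label false, reveal w_j
    have hq : qN n L t = wpt n j := by simp [qN, hc]
    have hy : yN n L t = false := by simp [yN, hc]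
    have hv : vN n L t = wpt n j := by simp [vN, hc]
    have he : eN n L t = some j := by simp [eN, hc]
    have hji : j ≠ i := by
      intro h; exact ht (h ▸ he)
    rw [hq, hy, hv]
    have hmem : InClosedNbhd (Ngr n i) (wpt n j) (wpt n j) := Or.inl rfl
    refine ⟨?_, fun _ => ⟨hmem, hj⟩, fun hne => absurd ⟨wpt n j, hmem, hj⟩ hne, by simp [hj]⟩
    simp [inducedLabel, Ngr_w, hpt_w, hji]
  · -- learner all-negative on relevant points : query 0, label true, reveal 0
    have hq : qN n L t = 0 := by simp [qN, hc]
    have hy : yN n L t = true := by simp [yN, hc]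
    have hv : vN n L t = 0 := by simp [vN, hc]
    rw [hq, hy, hv]
    have hnex : ¬ ∃ z, InClosedNbhd (Ngr n i) 0 z ∧ hseq n L t z = true := by
      rintro ⟨z, hz | hz, hzt⟩
      · rw [hz, h0] at hzt; exact Bool.false_ne_true hzt
      · rw [Ngr_zero, Finset.mem_singleton] at hz
        rw [hz, hw i] at hzt
        exact Bool.false_ne_true hzt
    refine ⟨?_, fun hex => absurd hex hnex, fun _ => rfl, by simp [h0]⟩
    simp [inducedLabel, Ngr_zero, hpt_zero, hpt_w]

/-- The set of eliminated indices during the first `n-1` rounds. -/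
def Elim : Finset (Fin n) := (Finset.range (n - 1)).biUnion fun t => (eN n L t).toFinset

lemma exists_not_elim (hn : 2 ≤ n) : ∃ i : Fin n, ∀ t < n - 1, eN n L t ≠ some i := by
  have hcard : (Elim n L).card ≤ n - 1 := by
    refine le_trans (Finset.card_biUnion_le) ?_
    calc ∑ t ∈ Finset.range (n - 1), (eN n L t).toFinset.card
        ≤ ∑ _t ∈ Finset.range (n - 1), 1 := by
          refine Finset.sum_le_sum fun t _ => ?_
          cases eN n L t <;> simp
      _ = n - 1 := by simp
  have hne : ∃ i : Fin n, i ∉ Elim n L := by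
    by_contra hc
    push_neg at hc
    have : Elim n L = Finset.univ := Finset.eq_univ_iff_forall.mpr hc
    rw [this, Finset.card_univ, Fintype.card_fin] at hcard
    omega
  obtain ⟨i, hi⟩ := hne
  refine ⟨i, fun t ht hsome => hi ?_⟩
  exact Finset.mem_biUnion.mpr ⟨t, Finset.mem_range.mpr ht, by simp [hsome]⟩

end PMFAux

open PMFAux in
/-- a mistake lower bound of `n−1` for learners that observe only
post-manipulation feedback in the unknown manipulation graph setting, with `|X| = n+2`,
a class `𝒢` of `n` graphs of maximum out-degree at most `2`, and `|H| = n` with standard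
mistake bound `1`. -/
theorem unknown_graph_post_manipulation_lower_bound :
    ∀ n : ℕ, 2 ≤ n →
      ∃ (X : Type) (inst : Fintype X) (𝒢 : Finset (X → Finset X)) (H : Set (X → Bool)),
        @Fintype.card X inst = n + 2 ∧
        𝒢.card = n ∧
        (∀ G ∈ 𝒢, ∀ x, (G x).card ≤ 2) ∧
        H.ncard = n ∧
        (∃ A : List (X × Bool) → X → Bool, StdMistakeBound A H 1) ∧
        ∀ L : List (X × Bool) → (X → Bool),
          ∃ Nstar ∈ 𝒢, ∃ (T : ℕ) (x : Fin T → X) (y : Fin T → Bool) (v : Fin T → X),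
            (∃ G ∈ 𝒢, ∀ t : Fin T, G (x t) = Nstar (x t)) ∧
            (∃ hstar ∈ H, ∀ t : Fin T, inducedLabel Nstar hstar (x t) = y t) ∧
            PMFConsistent Nstar (pmfHyp L v y) x v ∧
            n - 1 ≤ {t : Fin T | pmfHyp L v y t (v t) ≠ y t}.ncard := by
  intro n hn
  refine ⟨Fin (n + 2), inferInstance, Finset.image (Ngr n) Finset.univ,
    Set.range (hpt n), ?_, ?_, ?_, ?_, ?_, ?_⟩
  · simp
  · rw [Finset.card_image_of_injective _ (Ngr_injective n), Finset.card_univ,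
      Fintype.card_fin]
  · intro G hG x
    obtain ⟨i, _, rfl⟩ := Finset.mem_image.mp hG
    unfold Ngr
    split_ifs <;> simp
  · rw [← Set.image_univ, Set.ncard_image_of_injective _ (hpt_injective n),
      Set.ncard_univ, Nat.card_eq_fintype_card, Fintype.card_fin]
  · -- the standard online learner with mistake bound 1
    refine ⟨fun fb x => decide ((x, true) ∈ fb), ?_⟩
    rintro T seq ⟨h, ⟨i, rfl⟩, hcons⟩
    have key : ∀ t : Fin T,
        decide (((seq t).1, true) ∈ histFn seq t) ≠ (seq t).2 →
        (seq t).2 = true ∧ (seq t).1 = wpt n i ∧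
          ((seq t).1, true) ∉ histFn seq t := by
      intro t hm
      cases hy : (seq t).2 with
      | false =>
        exfalso
        rw [hy] at hm
        have hmem : ((seq t).1, true) ∈ histFn seq t := by
          by_contra hmm
          simp [hmm] at hm
        obtain ⟨s, hs⟩ := List.mem_ofFn.mp hmem
        have hs' : seq (Fin.castLE t.isLt.le s) = ((seq t).1, true) := hs
        have h1 : hpt n i (seq (Fin.castLE t.isLt.le s)).1 = (seq (Fin.castLE t.isLt.le s)).2 :=
          hcons _
        rw [hs'] at h1
        simp only [hpt] at h1
        have hxw : (seq t).1 = wpt n i := by simpa using h1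
        have h2 := hcons t
        rw [hy, hxw] at h2
        simp [hpt] at h2
      | true =>
        have hxw : (seq t).1 = wpt n i := by
          have h2 := hcons t
          rw [hy] at h2
          simpa [hpt] using h2
        rw [hy] at hm
        refine ⟨rfl, hxw, ?_⟩
        by_contra hmm
        simp [hmm] at hm
    rw [Set.ncard_le_one (Set.toFinite _)]
    intro a ha b hb
    simp only [Set.mem_setOf_eq] at ha hb
    by_contra hab
    rcases lt_or_gt_of_ne (Fin.val_ne_of_ne hab) with hlt | hlt
    · obtain ⟨hya, hxa, _⟩ := key a ha
      obtain ⟨_, hxb, hnb⟩ := key b hb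
      apply hnb
      apply List.mem_ofFn.mpr
      refine ⟨⟨a.1, hlt⟩, ?_⟩
      show seq (Fin.castLE b.isLt.le ⟨a.1, hlt⟩) = ((seq b).1, true)
      have : Fin.castLE b.isLt.le ⟨a.1, hlt⟩ = a := Fin.ext rfl
      rw [this, hxb, ← hxa, ← hya]
    · obtain ⟨hya, hxa, hna⟩ := key a ha
      obtain ⟨_, hxb, _⟩ := key b hb
      obtain ⟨hyb, _, _⟩ := key b hb
      apply hna
      apply List.mem_ofFn.mpr
      refine ⟨⟨b.1, hlt⟩, ?_⟩
      show seq (Fin.castLE a.isLt.le ⟨b.1, hlt⟩) = ((seq a).1, true)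
      have : Fin.castLE a.isLt.le ⟨b.1, hlt⟩ = b := Fin.ext rfl
      rw [this, hxa, ← hxb, ← hyb]
  · -- the adversary
    intro L
    obtain ⟨i, hi⟩ := exists_not_elim n L hn
    refine ⟨Ngr n i, Finset.mem_image_of_mem _ (Finset.mem_univ i), n - 1,
      fun t => qN n L t.1, fun t => yN n L t.1, fun t => vN n L t.1, ?_, ?_, ?_, ?_⟩
    · exact ⟨Ngr n i, Finset.mem_image_of_mem _ (Finset.mem_univ i), fun _ => rfl⟩
    · refine ⟨hpt n i, Set.mem_range_self i, fun t => ?_⟩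
      exact (main_round n L i t.1 (hi t.1 t.isLt)).1
    · intro t
      have hph : pmfHyp L (fun t : Fin (n-1) => vN n L t.1) (fun t => yN n L t.1) t
          = hseq n L t.1 := by
        show L _ = L (state n L t.1)
        rw [state_eq_ofFn]
        rfl
      rw [hph]
      obtain ⟨_, hc1, hc2, _⟩ := main_round n L i t.1 (hi t.1 t.isLt)
      exact ⟨hc1, hc2⟩
    · have hph : ∀ t : Fin (n-1),
          pmfHyp L (fun t : Fin (n-1) => vN n L t.1) (fun t => yN n L t.1) t
          = hseq n L t.1 := by
        intro t
        show L _ = L (state n L t.1)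
        rw [state_eq_ofFn]
        rfl
      have huniv : {t : Fin (n-1) |
          pmfHyp L (fun t : Fin (n-1) => vN n L t.1) (fun t => yN n L t.1) t (vN n L t.1)
            ≠ yN n L t.1} = Set.univ := by
        ext t
        simp only [Set.mem_setOf_eq, Set.mem_univ, iff_true]
        rw [hph t]
        exact (main_round n L i t.1 (hi t.1 t.isLt)).2.2.2
      rw [huniv, Set.ncard_univ, Nat.card_eq_fintype_card, Fintype.card_fin]
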